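/- Fejér-type inequality for generalized primal-dual resolvents: Let H be a real Hilbert space, A = (A₁,…,A_n) with each A_i maximally monotone, A_i β_i-cocoercive for i ∈ F, p ∉ F, and suppose zer Φ_{A,p} ≠ ∅. Let S ∈ ℝ^(n×d), P ∈ ℝ^(d×n), U ∈ ℝ^(d×d), and let Q ∈ ℝ^(d×d) be symmetric with (I − I_F)(PᵀQ − S)U = 0, where I_F is the diagonal 0/1 matrix of F. Suppose z ∈ H^d and y ∈ H^n satisfy SU(z − Py) ∈ Φ_{A,p}y, and set z⁺ = z − U(z − Py). Then for every y* ∈ zer Φ_{A,p}: ‖z⁺ − Py*‖²_Q ≤ ‖z − Py*‖²_Q − ‖z − Py‖²_W, where W = QU + (QU)ᵀ − UᵀQU − ½Uᵀ(PᵀQ − S)ᵀB†(PᵀQ − S)U and B† is the diagonal matrix with entries β_i⁻¹ for i ∈ F and 0 otherwise. -/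
import Mathlib

open RealInnerProductSpace Finset Matrix

/-- A set-valued operator `A : H → 2^H` is monotone. -/
def MonotoneOp {H : Type*} [NormedAddCommGroup H] [InnerProductSpace ℝ H]
    (A : H → Set H) : Prop :=
  ∀ ⦃x u y v : H⦄, u ∈ A x → v ∈ A y → 0 ≤ ⟪u - v, x - y⟫

/-- Maximal monotonicity. -/
def MaxMonotone {H : Type*} [NormedAddCommGroup H] [InnerProductSpace ℝ H]
    (A : H → Set H) : Prop :=
  MonotoneOp A ∧ ∀ B : H → Set H, MonotoneOp B → (∀ x, A x ⊆ B x) → ∀ x, B x = A x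

/-- `f` is `β`-cocoercive. -/
def Cocoercive {H : Type*} [NormedAddCommGroup H] [InnerProductSpace ℝ H]
    (β : ℝ) (f : H → H) : Prop :=
  ∀ x y : H, β * ‖f x - f y‖ ^ 2 ≤ ⟪f x - f y, x - y⟫

/-- A real matrix acting componentwise on a power of a real vector space. -/
def matVecH {H : Type*} [AddCommGroup H] [Module ℝ H] {a b : ℕ}
    (M : Matrix (Fin a) (Fin b) ℝ) (x : Fin b → H) : Fin a → H :=
  fun i => ∑ j, M i j • x j

/-- `Γ_p = R_p - R_pᵀ`, where `R_p` has ones in row `p` and zeros elsewhere. -/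
def GammaMat (n : ℕ) (p : Fin n) : Matrix (Fin n) (Fin n) ℝ :=
  Matrix.of fun i j => (if i = p then (1 : ℝ) else 0) - (if j = p then (1 : ℝ) else 0)

/-- The primal-dual operator `Φ_{A,p} = Δ_{A,p} + Γ_p` on `H^n`. -/
def PhiOp {H : Type*} [NormedAddCommGroup H] [InnerProductSpace ℝ H] {n : ℕ}
    (A : Fin n → H → Set H) (p : Fin n) (y : Fin n → H) : Set (Fin n → H) :=
  {u | ∀ i, u i - matVecH (GammaMat n p) y i ∈
        (if i = p then A i (y i) else {w | y i ∈ A i w})}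

/-- The quadratic form `‖x‖²_Q = ⟨Qx, x⟩` on `H^d`. -/
def qnormSq {H : Type*} [NormedAddCommGroup H] [InnerProductSpace ℝ H] {d : ℕ}
    (Q : Matrix (Fin d) (Fin d) ℝ) (x : Fin d → H) : ℝ :=
  ∑ i, ⟪matVecH Q x i, x i⟫

section Aux
variable {H : Type*} [NormedAddCommGroup H] [InnerProductSpace ℝ H]

lemma matVecH_sub {a b : ℕ} (M : Matrix (Fin a) (Fin b) ℝ) (x y : Fin b → H) :
    matVecH M (x - y) = matVecH M x - matVecH M y := by
  funext i
  simp [matVecH, smul_sub, Finset.sum_sub_distrib]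

lemma matVecH_mmul {a b c : ℕ} (M : Matrix (Fin a) (Fin b) ℝ)
    (N : Matrix (Fin b) (Fin c) ℝ) (x : Fin c → H) :
    matVecH (M * N) x = matVecH M (matVecH N x) := by
  funext i
  simp only [matVecH, Matrix.mul_apply, Finset.sum_smul, Finset.smul_sum, mul_smul]
  exact Finset.sum_comm.symm

lemma matVecH_madd {a b : ℕ} (M N : Matrix (Fin a) (Fin b) ℝ) (x : Fin b → H) :
    matVecH (M + N) x = matVecH M x + matVecH N x := by
  funext i; simp [matVecH, add_smul, Finset.sum_add_distrib]

lemma matVecH_msub {a b : ℕ} (M N : Matrix (Fin a) (Fin b) ℝ) (x : Fin b → H) :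
    matVecH (M - N) x = matVecH M x - matVecH N x := by
  funext i; simp [matVecH, sub_smul, Finset.sum_sub_distrib]

lemma matVecH_msmul {a b : ℕ} (c : ℝ) (M : Matrix (Fin a) (Fin b) ℝ) (x : Fin b → H) :
    matVecH (c • M) x = c • matVecH M x := by
  funext i; simp [matVecH, mul_smul, Finset.smul_sum]

lemma matVecH_diag {a : ℕ} (f : Fin a → ℝ) (x : Fin a → H) (i : Fin a) :
    matVecH (Matrix.diagonal f) x i = f i • x i := by
  simp [matVecH, Matrix.diagonal_apply, ite_smul]

lemma ip_matVec {a b : ℕ} (M : Matrix (Fin a) (Fin b) ℝ) (x : Fin b → H) (y : Fin a → H) :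
    ∑ i, ⟪matVecH M x i, y i⟫ = ∑ j, ⟪x j, matVecH Mᵀ y j⟫ := by
  simp only [matVecH, sum_inner, inner_sum, real_inner_smul_left, real_inner_smul_right,
    Matrix.transpose_apply]
  exact Finset.sum_comm

lemma qnorm_expand {d : ℕ} (Q : Matrix (Fin d) (Fin d) ℝ) (hQ : Qᵀ = Q) (x v : Fin d → H) :
    qnormSq Q (x - v) =
      qnormSq Q x - 2 * ∑ i, ⟪matVecH Q v i, x i⟫ + qnormSq Q v := by
  have h1 : ∑ i, ⟪matVecH Q x i, v i⟫ = ∑ i, ⟪matVecH Q v i, x i⟫ := by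
    rw [ip_matVec, hQ]
    exact Finset.sum_congr rfl fun j _ => real_inner_comm _ _
  simp only [qnormSq, matVecH_sub, Pi.sub_apply, inner_sub_left, inner_sub_right,
    Finset.sum_sub_distrib]
  rw [h1]; ring

lemma gamma_skew {n : ℕ} (p : Fin n) (e : Fin n → H) :
    ∑ i, ⟪matVecH (GammaMat n p) e i, e i⟫ = 0 := by
  have hΓ : ∀ i, matVecH (GammaMat n p) e i
      = (if i = p then (1 : ℝ) else 0) • (∑ j, e j) - e p := by
    intro i
    simp [matVecH, GammaMat, sub_smul, Finset.sum_sub_distrib, ite_smul, Finset.smul_sum,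
      Finset.sum_ite_eq']
  simp only [hΓ, inner_sub_left, Finset.sum_sub_distrib]
  have h2 : ∑ i, ⟪(if i = p then (1 : ℝ) else 0) • (∑ j, e j), e i⟫ = ⟪∑ j, e j, e p⟫ := by
    simp only [real_inner_smul_left, ite_mul, one_mul, zero_mul]
    simp [Finset.sum_ite_eq']
  have h3 : ∑ i, ⟪e p, e i⟫ = ⟪e p, ∑ j, e j⟫ := (inner_sum _ _ _).symm
  rw [h2, h3, real_inner_comm, sub_self]

end Aux

/-- Fejér-type inequality for generalized primal-dual resolvents: with
`A` maximally monotone, `Aᵢ = a i` single-valued `βᵢ`-cocoercive for `i ∈ F`, `p ∉ F`,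
`Q` symmetric with `(I − I_F)(PᵀQ − S)U = 0`, `SU(z − Py) ∈ Φ_{A,p} y` and
`z⁺ = z − U(z − Py)`, one has for every zero `y*` of `Φ_{A,p}`:
`‖z⁺ − Py*‖²_Q ≤ ‖z − Py*‖²_Q − ‖z − Py‖²_W`. -/
theorem stmt13 {H : Type*} [NormedAddCommGroup H] [InnerProductSpace ℝ H] {n d : ℕ}
    (F : Finset (Fin n)) (p : Fin n) (hp : p ∉ F)
    (A : Fin n → H → Set H) (a : Fin n → H → H) (β : Fin n → ℝ)
    (hmax : ∀ i, MaxMonotone (A i))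
    (hβ : ∀ i ∈ F, 0 < β i)
    (hsv : ∀ i ∈ F, A i = fun x => {a i x})
    (hcoco : ∀ i ∈ F, Cocoercive (β i) (a i))
    (S : Matrix (Fin n) (Fin d) ℝ) (P : Matrix (Fin d) (Fin n) ℝ)
    (U Q : Matrix (Fin d) (Fin d) ℝ) (hQ : Qᵀ = Q)
    (hstruct : ((1 : Matrix (Fin n) (Fin n) ℝ) -
        Matrix.diagonal (fun i => if i ∈ F then (1 : ℝ) else 0)) * (Pᵀ * Q - S) * U = 0)
    (z : Fin d → H) (y : Fin n → H)
    (hy : matVecH (S * U) (z - matVecH P y) ∈ PhiOp A p y)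
    (ystar : Fin n → H) (hstar : (0 : Fin n → H) ∈ PhiOp A p ystar) :
    qnormSq Q ((z - matVecH U (z - matVecH P y)) - matVecH P ystar) ≤
      qnormSq Q (z - matVecH P ystar) -
        qnormSq (Q * U + (Q * U)ᵀ - Uᵀ * Q * U -
          (1 / 2 : ℝ) • (Uᵀ * (Pᵀ * Q - S)ᵀ *
            (Matrix.diagonal fun i => if i ∈ F then (β i)⁻¹ else 0) *
            ((Pᵀ * Q - S) * U))) (z - matVecH P y) := by
  classical
  set w : Fin d → H := z - matVecH P y with hw
  set e : Fin n → H := y - ystar with he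
  set g : Fin n → H := matVecH ((Pᵀ * Q - S) * U) w with hg
  set u : Fin n → H := matVecH (S * U) w with hu
  set x0 : Fin d → H := z - matVecH P ystar with hx0
  -- g vanishes off F
  have hgF : ∀ i ∉ F, g i = 0 := by
    intro i hi
    have hM : ∀ j, ((Pᵀ * Q - S) * U) i j = 0 := by
      intro j
      have h0 : (((1 : Matrix (Fin n) (Fin n) ℝ) -
          Matrix.diagonal (fun i => if i ∈ F then (1 : ℝ) else 0)) * (Pᵀ * Q - S) * U) i j = 0 := by
        rw [hstruct]; rfl
      rw [Matrix.mul_assoc, Matrix.sub_mul, Matrix.one_mul, Matrix.sub_apply,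
        Matrix.diagonal_mul] at h0
      simpa [hi] using h0
    simp [hg, matVecH, hM]
  -- strong-monotonicity-type inequality, pointwise
  have hmono : ∀ i, (if i ∈ F then β i * ‖e i‖ ^ 2 else 0)
      ≤ ⟪u i - matVecH (GammaMat n p) e i, e i⟫ := by
    intro i
    have h1 := hy i
    have h2 := hstar i
    set xi := u i - matVecH (GammaMat n p) y i with hxi
    set xsi := (0 : Fin n → H) i - matVecH (GammaMat n p) ystar i with hxsi
    have hxe : u i - matVecH (GammaMat n p) e i = xi - xsi := by
      rw [he, matVecH_sub, hxi, hxsi]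
      simp only [Pi.sub_apply, Pi.zero_apply]
      abel
    have hei : e i = y i - ystar i := rfl
    by_cases hip : i = p
    · subst hip
      rw [if_pos rfl] at h1 h2
      have := (hmax i).1 h1 h2
      rw [hxe, hei, if_neg hp]
      exact this
    · rw [if_neg hip] at h1 h2
      by_cases hiF : i ∈ F
      · rw [hsv i hiF] at h1 h2
        have hy1 : y i = a i xi := h1
        have hy2 : ystar i = a i xsi := h2
        have := hcoco i hiF xi xsi
        rw [← hy1, ← hy2] at this
        rw [hxe, hei, if_pos hiF, real_inner_comm]
        exact this
      · have := (hmax i).1 h1 h2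
        rw [hxe, hei, if_neg hiF, real_inner_comm]
        exact this
  -- summed monotonicity
  have hsum : ∑ i, (if i ∈ F then β i * ‖e i‖ ^ 2 else 0) ≤ ∑ i, ⟪e i, u i⟫ := by
    have h1 : ∑ i, (if i ∈ F then β i * ‖e i‖ ^ 2 else 0)
        ≤ ∑ i, ⟪u i - matVecH (GammaMat n p) e i, e i⟫ :=
      Finset.sum_le_sum fun i _ => hmono i
    have h2 : ∑ i, ⟪u i - matVecH (GammaMat n p) e i, e i⟫
        = ∑ i, ⟪e i, u i⟫ := by
      simp only [inner_sub_left, Finset.sum_sub_distrib, gamma_skew, sub_zero]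
      exact Finset.sum_congr rfl fun i _ => real_inner_comm _ _
    linarith [h1, h2.symm.le]
  -- abbreviations for the scalar quantities
  set t1 : ℝ := ∑ i, ⟪matVecH Q (matVecH U w) i, w i⟫ with ht1
  set t2 : ℝ := ∑ i, ⟪matVecH Q (matVecH U w) i, matVecH U w i⟫ with ht2
  set tx : ℝ := ∑ i, ⟪matVecH Q (matVecH U w) i, x0 i⟫ with htx
  set t3 : ℝ := ∑ i, (if i ∈ F then (β i)⁻¹ else 0) * ‖g i‖ ^ 2 with ht3
  -- Step A : expand LHS
  have hA : qnormSq Q ((z - matVecH U w) - matVecH P ystar)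
      = qnormSq Q x0 - 2 * tx + t2 := by
    have hre : (z - matVecH U w) - matVecH P ystar = x0 - matVecH U w := by
      rw [hx0]; funext i; simp only [Pi.sub_apply]; abel
    rw [hre, qnorm_expand Q hQ x0 (matVecH U w), htx, ht2]
    rfl
  -- Step B : expand the W-seminorm
  have hB : qnormSq (Q * U + (Q * U)ᵀ - Uᵀ * Q * U -
        (1 / 2 : ℝ) • (Uᵀ * (Pᵀ * Q - S)ᵀ *
          (Matrix.diagonal fun i => if i ∈ F then (β i)⁻¹ else 0) *
          ((Pᵀ * Q - S) * U))) w = 2 * t1 - t2 - (1 / 2) * t3 := by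
    have e1 : ∑ i, ⟪matVecH (Q * U) w i, w i⟫ = t1 := by
      rw [matVecH_mmul]
    have e2 : ∑ i, ⟪matVecH (Q * U)ᵀ w i, w i⟫ = t1 := by
      rw [ip_matVec, Matrix.transpose_transpose, matVecH_mmul, ht1]
      exact Finset.sum_congr rfl fun i _ => real_inner_comm _ _
    have e3 : ∑ i, ⟪matVecH (Uᵀ * Q * U) w i, w i⟫ = t2 := by
      rw [Matrix.mul_assoc, matVecH_mmul, ip_matVec, Matrix.transpose_transpose,
        matVecH_mmul, ht2]
    have e4 : ∑ i, ⟪matVecH (Uᵀ * (Pᵀ * Q - S)ᵀ *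
          (Matrix.diagonal fun i => if i ∈ F then (β i)⁻¹ else 0) *
          ((Pᵀ * Q - S) * U)) w i, w i⟫ = t3 := by
      have hMt : Uᵀ * (Pᵀ * Q - S)ᵀ = ((Pᵀ * Q - S) * U)ᵀ := (Matrix.transpose_mul _ _).symm
      rw [hMt, Matrix.mul_assoc, matVecH_mmul, ip_matVec, Matrix.transpose_transpose,
        matVecH_mmul, ht3]
      refine Finset.sum_congr rfl fun i _ => ?_
      rw [← hg, matVecH_diag, real_inner_smul_left, real_inner_self_eq_norm_sq]
    simp only [qnormSq, matVecH_msub, matVecH_madd, matVecH_msmul, Pi.sub_apply, Pi.add_apply,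
      Pi.smul_apply, inner_sub_left, inner_add_left, real_inner_smul_left,
      Finset.sum_sub_distrib, Finset.sum_add_distrib, ← Finset.mul_sum]
    rw [e1, e2, e3, e4]
    ring
  -- Step C : tx - t1 = ⟪e, g⟫ + ⟪e, u⟫
  have hC : tx - t1 = (∑ i, ⟪e i, g i⟫) + ∑ i, ⟪e i, u i⟫ := by
    have hPe : x0 - w = matVecH P e := by
      rw [hx0, hw, he, matVecH_sub]
      funext i; simp only [Pi.sub_apply]; abel
    have h1 : tx - t1 = ∑ i, ⟪matVecH Q (matVecH U w) i, matVecH P e i⟫ := by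
      rw [htx, ht1, ← Finset.sum_sub_distrib, ← hPe]
      exact Finset.sum_congr rfl fun i _ => (inner_sub_right _ _ _).symm
    have h2 : ∑ i, ⟪matVecH Q (matVecH U w) i, matVecH P e i⟫
        = ∑ i, ⟪matVecH P e i, matVecH Q (matVecH U w) i⟫ :=
      Finset.sum_congr rfl fun i _ => real_inner_comm _ _
    have h3 : ∑ i, ⟪matVecH P e i, matVecH Q (matVecH U w) i⟫
        = ∑ j, ⟪e j, matVecH (Pᵀ * (Q * U)) w j⟫ := by
      rw [ip_matVec, matVecH_mmul, matVecH_mmul]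
    have h4 : Pᵀ * (Q * U) = (Pᵀ * Q - S) * U + S * U := by
      rw [Matrix.sub_mul, sub_add_cancel, Matrix.mul_assoc]
    rw [h1, h2, h3, h4]
    simp only [matVecH_madd, Pi.add_apply, inner_add_right, Finset.sum_add_distrib, ← hg, ← hu]
  -- Step E : pointwise Young inequality
  have hE : 0 ≤ ∑ i, (2 * ⟪e i, g i⟫ + 2 * (if i ∈ F then β i * ‖e i‖ ^ 2 else 0)
      + (1 / 2) * ((if i ∈ F then (β i)⁻¹ else 0) * ‖g i‖ ^ 2)) := by
    refine Finset.sum_nonneg fun i _ => ?_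
    by_cases hiF : i ∈ F
    · simp only [if_pos hiF]
      have hb := hβ i hiF
      have hb' : (β i) * (β i)⁻¹ = 1 := mul_inv_cancel₀ hb.ne'
      have hn : 0 ≤ ‖g i + (2 * β i) • e i‖ ^ 2 := sq_nonneg _
      have hexp : ‖g i + (2 * β i) • e i‖ ^ 2
          = ‖g i‖ ^ 2 + 2 * ((2 * β i) * ⟪g i, e i⟫) + (2 * β i) ^ 2 * ‖e i‖ ^ 2 := by
        rw [norm_add_sq_real, real_inner_smul_right, norm_smul, Real.norm_eq_abs,
          mul_pow, sq_abs]
      rw [hexp] at hn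
      have hcm : ⟪e i, g i⟫ = ⟪g i, e i⟫ := real_inner_comm _ _
      nlinarith [mul_nonneg (le_of_lt (inv_pos.mpr hb)) hn, sq_nonneg (β i), hb]
    · simp [if_neg hiF, hgF i hiF]
  -- assemble
  rw [hA, hB]
  have hsplit : ∑ i, (2 * ⟪e i, g i⟫ + 2 * (if i ∈ F then β i * ‖e i‖ ^ 2 else 0)
      + (1 / 2) * ((if i ∈ F then (β i)⁻¹ else 0) * ‖g i‖ ^ 2))
      = 2 * (∑ i, ⟪e i, g i⟫) + 2 * (∑ i, (if i ∈ F then β i * ‖e i‖ ^ 2 else 0))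
        + (1 / 2) * t3 := by
    rw [ht3]
    simp only [Finset.sum_add_distrib, Finset.mul_sum, mul_assoc]
  rw [hsplit] at hE
  linarith [hsum, hC, hE]
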